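/- The polynomial 27x₃² - x₂³ is invariant under the vector field v, i.e., v applied to 27x₃² - x₂³ equals a polynomial multiple of 27x₃² - x₂³; in other words, the hypersurface Δ₁ = {27x₃² - x₂³ = 0} is tangent to the foliation defined by v. -/

import Mathlib

/-! Write `Δ = 27x₃² - x₂³`. On functions of `x₂, x₃` the field is
`v = W + (x₂ - y₂)/12 · E`, where `W = (2x₂ - 6x₃)∂₂ + (3x₃ - x₂²/3)∂₃` and `E = 2x₂∂₂ + 3x₃∂₃`
is the Euler field for the weights `(2, 3)`. Since `Δ` is weighted homogeneous of degree 6,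
`E Δ = 6Δ`, and a direct computation gives `W Δ = 6Δ`; hence `v Δ = (6 + (x₂ - y₂)/2) Δ`. -/

open MvPolynomial

/-- The derivation `v` of ℚ[x₂,x₃,y₂,y₃] (variables `X 0 = x₂`, `X 1 = x₃`,
`X 2 = y₂`, `X 3 = y₃`) with
`v(x₂) = 2x₂ - 6x₃ + (1/6)(x₂-y₂)x₂`,
`v(x₃) = 3x₃ - (1/3)x₂² + (1/4)(x₂-y₂)x₃`,
`v(y₂) = -(2y₂ - 6y₃ + (1/6)(y₂-x₂)y₂)`,
`v(y₃) = -(3y₃ - (1/3)y₂² + (1/4)(y₂-x₂)y₃)`. -/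
noncomputable def vD : Derivation ℚ (MvPolynomial (Fin 4) ℚ) (MvPolynomial (Fin 4) ℚ) :=
  mkDerivation ℚ
    ![2 * X 0 - 6 * X 1 + C (1/6 : ℚ) * (X 0 - X 2) * X 0,
      3 * X 1 - C (1/3 : ℚ) * X 0 ^ 2 + C (1/4 : ℚ) * (X 0 - X 2) * X 1,
      -(2 * X 2 - 6 * X 3 + C (1/6 : ℚ) * (X 2 - X 0) * X 2),
      -(3 * X 3 - C (1/3 : ℚ) * X 2 ^ 2 + C (1/4 : ℚ) * (X 2 - X 0) * X 3)]

theorem Derivation.map_ofNat_mul_sq_sub_cube {R A : Type*} [CommSemiring R] [CommRing A]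
    [Algebra R A] (d : Derivation R A A) (n : ℕ) [n.AtLeastTwo] (a b : A) :
    d (OfNat.ofNat n * b ^ 2 - a ^ 3) = 2 * OfNat.ofNat n * b * d b - 3 * a ^ 2 * d a := by
  rw [map_sub, Derivation.leibniz, Derivation.leibniz_pow, Derivation.leibniz_pow,
    ← Nat.cast_ofNat, Derivation.map_natCast]
  simp only [smul_eq_mul, nsmul_eq_mul, Nat.cast_ofNat]
  ring

theorem vD_X_zero : vD (X 0) = 2 * X 0 - 6 * X 1 + C (1/6 : ℚ) * (X 0 - X 2) * X 0 :=
  mkDerivation_X ℚ _ 0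

theorem vD_X_one :
    vD (X 1) = 3 * X 1 - C (1/3 : ℚ) * X 0 ^ 2 + C (1/4 : ℚ) * (X 0 - X 2) * X 1 :=
  mkDerivation_X ℚ _ 1

/-- The polynomial `27x₃² - x₂³` is invariant under the vector field `v`:
`v(27x₃² - x₂³)` is a polynomial multiple of `27x₃² - x₂³`, i.e. the
hypersurface `Δ₁ = {27x₃² - x₂³ = 0}` is tangent to the foliation defined by `v`. -/
theorem delta1_invariant :
    ∃ q : MvPolynomial (Fin 4) ℚ,
      vD (27 * X 1 ^ 2 - X 0 ^ 3) = q * (27 * X 1 ^ 2 - X 0 ^ 3) := by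
  refine ⟨6 + C (1/2 : ℚ) * (X 0 - X 2), ?_⟩
  rw [vD.map_ofNat_mul_sq_sub_cube, vD_X_zero, vD_X_one]
  refine MvPolynomial.funext fun x => ?_
  simp only [map_add, map_sub, map_mul, map_pow, map_ofNat, eval_X, eval_C]
  ring
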